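/- arXiv:1811.00247 — 7 statements merged into one kernel-verified Lean document; each statement's English description precedes it below -/
import Mathlib

section
/- There exists a constant C > 0 such that the following holds. Let X be a measurable space, S ≥ 1 and B ≥ 1 natural numbers, and let ν be a probability measure on the batch space W := Fin S → (X × Bool × Bool). Let H be a nonempty countable set of measurable functions h : X → ℝ with 0 ≤ h x ≤ 1 for all x. Let μ̄ > 0, let N ≥ 1, and let G be a finite set of measurable functions g : X → ℝ with 0 ≤ g x ≤ 1, with card(G) ≤ N, such that for every h ∈ H there is g ∈ G with |h x − g x| ≤ μ̄/S for all x ∈ X. Then for every δ ∈ (0,1), the product measure ν^B on Fin B → W assigns measure at least 1 − δ to the set of tuples (w⁽¹⁾, …, w⁽ᴮ⁾) such that for every h ∈ H: ∫ constDP(h, w) dν(w) ≤ (1/B) ∑_{ℓ=1}^{B} constDP(h, w⁽ℓ⁾) + 2·(μ̄ + √(2·log N / B)) + C·√(log(1/δ)/B). -/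
open MeasureTheory

/-- A Boolean attribute viewed as the real number `0` or `1`. -/
noncomputable def bval (b : Bool) : ℝ := if b then 1 else 0

/-- The demographic-parity constraint of a classifier `h` on a batch of `S`
samples `w i = (xᵢ, aᵢ, yᵢ)`. -/
noncomputable def constDP {X : Type*} {S : ℕ} (h : X → ℝ)
    (w : Fin S → X × Bool × Bool) : ℝ :=
  |(∑ i, h (w i).1 * bval (w i).2.1) / (∑ i, bval (w i).2.1) -
    (∑ i, h (w i).1 * (1 - bval (w i).2.1)) / (∑ i, (1 - bval (w i).2.1))|

/-!
For a fixed `g`, the value `constDP g w` lies in `[0, 1]`, so by Hoeffding's inequality the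
empirical mean of `constDP g` over `B` independent batches falls short of its expectation by
`ε` with probability at most `exp (-2 B ε²)`. A union bound over the at most `N` elements of `G`,
with `ε = √(2 log N / B) + √(log (1 / δ) / B)`, makes all of them good simultaneously with
probability at least `1 - δ`. Each of the two group averages in `constDP` moves by at most
`μbar / S` when `h` is replaced by its cover element `g`, and only nonempty groups move, so
`constDP` moves by at most `μbar`; every `h ∈ H` then inherits the bound of its `g` at the cost
of `2 μbar`, once for the expectation and once for the empirical mean. Hence `C = 1` works.
-/

open ProbabilityTheory Real Finset Set

section WeightedAverage

variable {ι : Type*} [Fintype ι] {c : ι → ℝ}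

theorem div_sum_mem_Icc (hc : ∀ i, 0 ≤ c i) {v : ι → ℝ} (hv : ∀ i, v i ∈ Icc (0 : ℝ) 1) :
    (∑ i, v i * c i) / ∑ i, c i ∈ Icc (0 : ℝ) 1 := by
  have hsum : ∑ i, v i * c i ≤ ∑ i, c i :=
    sum_le_sum fun i _ => mul_le_of_le_one_left (hc i) (hv i).2
  have hweight : 0 ≤ ∑ i, c i := sum_nonneg fun i _ => hc i
  exact ⟨div_nonneg (sum_nonneg fun i _ => mul_nonneg (hv i).1 (hc i)) hweight,
    div_le_one_of_le₀ hsum hweight⟩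

theorem abs_div_sum_sub_div_sum_le (hc : ∀ i, 0 ≤ c i) {v u : ι → ℝ} {r : ℝ} (hr : 0 ≤ r)
    (hvu : ∀ i, |v i - u i| ≤ r) :
    |(∑ i, v i * c i) / ∑ i, c i - (∑ i, u i * c i) / ∑ i, c i| ≤ r := by
  rcases (sum_nonneg fun i _ => hc i).eq_or_lt with h0 | hpos
  · rwa [← h0, div_zero, div_zero, sub_zero, abs_zero]
  rw [div_sub_div_same, abs_div, abs_of_pos hpos, div_le_iff₀ hpos, mul_sum, ← sum_sub_distrib]
  calc |∑ i, (v i * c i - u i * c i)| ≤ ∑ i, |v i - u i| * c i := by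
        refine (abs_sum_le_sum_abs _ _).trans (sum_le_sum fun i _ => ?_)
        rw [← sub_mul, abs_mul, abs_of_nonneg (hc i)]
    _ ≤ ∑ i, r * c i := sum_le_sum fun i _ => by gcongr; exacts [hc i, hvu i]

-- A group of positive weight has weight at least `1`, so this bound adds up to `S * r` over the
-- two groups of `constDP`.
theorem abs_div_sum_sub_div_sum_le_mul_sum (hc : ∀ i, c i = 0 ∨ c i = 1) {v u : ι → ℝ} {r : ℝ}
    (hr : 0 ≤ r) (hvu : ∀ i, |v i - u i| ≤ r) :
    |(∑ i, v i * c i) / ∑ i, c i - (∑ i, u i * c i) / ∑ i, c i| ≤ r * ∑ i, c i := by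
  have hc0 : ∀ i, 0 ≤ c i := fun i => by rcases hc i with h | h <;> simp [h]
  rcases eq_or_ne (∑ i, c i) 0 with h0 | hne
  · simp [h0]
  obtain ⟨i, -, hi⟩ := exists_ne_zero_of_sum_ne_zero hne
  have hone : 1 ≤ ∑ i, c i :=
    (hc i).resolve_left hi ▸ single_le_sum (fun j _ => hc0 j) (mem_univ i)
  exact (abs_div_sum_sub_div_sum_le hc0 hr hvu).trans (le_mul_of_one_le_right hr hone)

end WeightedAverage

section DemographicParity

variable {X : Type*} {S : ℕ}

theorem bval_eq_zero_or_one (b : Bool) : bval b = 0 ∨ bval b = 1 := by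
  cases b <;> simp [bval]

theorem one_sub_bval_eq_zero_or_one (b : Bool) : 1 - bval b = 0 ∨ 1 - bval b = 1 := by
  cases b <;> simp [bval]

theorem constDP_mem_Icc {h : X → ℝ} (hh : ∀ x, h x ∈ Icc (0 : ℝ) 1)
    (w : Fin S → X × Bool × Bool) : constDP h w ∈ Icc (0 : ℝ) 1 := by
  have nonneg (b : Bool) : 0 ≤ bval b ∧ 0 ≤ 1 - bval b := by
    rcases bval_eq_zero_or_one b with h | h <;> simp [h]
  obtain ⟨h₁, h₁'⟩ := div_sum_mem_Icc (fun i => (nonneg (w i).2.1).1) fun i => hh (w i).1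
  obtain ⟨h₀, h₀'⟩ := div_sum_mem_Icc (fun i => (nonneg (w i).2.1).2) fun i => hh (w i).1
  exact ⟨abs_nonneg _, abs_sub_le_of_nonneg_of_le h₁ h₁' h₀ h₀'⟩

theorem abs_constDP_sub_le {h g : X → ℝ} {r : ℝ} (hr : 0 ≤ r) (hhg : ∀ x, |h x - g x| ≤ r)
    (w : Fin S → X × Bool × Bool) : |constDP h w - constDP g w| ≤ S * r := by
  have hpart : ∑ i, bval (w i).2.1 + ∑ i, (1 - bval (w i).2.1) = S := by
    rw [← sum_add_distrib]
    simp
  have h₁ := abs_div_sum_sub_div_sum_le_mul_sum (fun i => bval_eq_zero_or_one (w i).2.1) hr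
    (fun i => hhg (w i).1)
  have h₀ := abs_div_sum_sub_div_sum_le_mul_sum (fun i => one_sub_bval_eq_zero_or_one (w i).2.1) hr
    (fun i => hhg (w i).1)
  calc |constDP h w - constDP g w| ≤ _ := abs_abs_sub_abs_le_abs_sub _ _
    _ ≤ _ := by rw [sub_sub_sub_comm]; exact abs_sub _ _
    _ ≤ _ := add_le_add h₁ h₀
    _ = S * r := by rw [← mul_add, hpart, mul_comm]

@[fun_prop]
theorem measurable_bval : Measurable bval := measurable_from_top

theorem measurable_constDP [MeasurableSpace X] {h : X → ℝ} (hh : Measurable h) :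
    Measurable (constDP h : (Fin S → X × Bool × Bool) → ℝ) := by
  unfold constDP
  fun_prop

theorem integrable_constDP [MeasurableSpace X] {ν : Measure (Fin S → X × Bool × Bool)}
    [IsFiniteMeasure ν] {h : X → ℝ} (hh : Measurable h) (hh01 : ∀ x, h x ∈ Icc (0 : ℝ) 1) :
    Integrable (constDP h) ν :=
  Integrable.of_mem_Icc 0 1 (measurable_constDP hh).aemeasurable
    (ae_of_all ν (constDP_mem_Icc hh01))

end DemographicParity

section Concentration

variable {Ω : Type*} [MeasurableSpace Ω] (ν : Measure Ω) [IsProbabilityMeasure ν] (B : ℕ)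

theorem measureReal_pi_mul_le_sum_integral_sub_le {φ : Ω → ℝ} (hφ : Measurable φ)
    (hφ01 : ∀ ω, φ ω ∈ Icc (0 : ℝ) 1) {ε : ℝ} (hε : 0 ≤ ε) :
    (Measure.pi fun _ : Fin B => ν).real {ws | B * ε ≤ ∑ ℓ, (∫ ω, φ ω ∂ν - φ (ws ℓ))} ≤
      exp (-2 * B * ε ^ 2) := by
  have hdev : HasSubgaussianMGF (fun ω => ∫ ω, φ ω ∂ν - φ ω) (1 / 4) ν := by
    have := (hasSubgaussianMGF_of_mem_Icc hφ.aemeasurable (ae_of_all ν hφ01)).neg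
    norm_num [Pi.neg_def] at this
    exact this
  have hindep : iIndepFun (fun (ℓ : Fin B) ws => ∫ ω, φ ω ∂ν - φ (ws ℓ))
      (Measure.pi fun _ => ν) :=
    iIndepFun_pi (X := fun _ ω => ∫ ω, φ ω ∂ν - φ ω) fun _ => by fun_prop
  have hcoord (ℓ : Fin B) : HasSubgaussianMGF (fun ws : Fin B → Ω => ∫ ω, φ ω ∂ν - φ (ws ℓ)) (1 / 4)
      (Measure.pi fun _ => ν) :=
    HasSubgaussianMGF.of_map (X := fun ω => ∫ ω, φ ω ∂ν - φ ω) (Y := fun ws : Fin B → Ω => ws ℓ)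
      (measurable_pi_apply ℓ).aemeasurable (by rwa [(measurePreserving_eval _ ℓ).map_eq])
  refine (HasSubgaussianMGF.measure_sum_ge_le_of_iIndepFun hindep (s := univ)
    (fun ℓ _ => hcoord ℓ) (by positivity)).trans_eq ?_
  rcases eq_or_ne (B : ℝ) 0 with hB | hB
  · simp [hB]
  · simp only [sum_const, card_univ, Fintype.card_fin, nsmul_eq_mul, NNReal.coe_mul,
      NNReal.coe_natCast, NNReal.coe_div, NNReal.coe_one, NNReal.coe_ofNat, neg_mul, exp_eq_exp]
    field_simp
    ring

theorem measure_pi_exists_mul_le_sum_integral_sub_le {α : Type*} (G : Finset α) {φ : α → Ω → ℝ}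
    (hφ : ∀ g ∈ G, Measurable (φ g)) (hφ01 : ∀ g ∈ G, ∀ ω, φ g ω ∈ Icc (0 : ℝ) 1) {ε : ℝ}
    (hε : 0 ≤ ε) :
    (Measure.pi fun _ : Fin B => ν) {ws | ∃ g ∈ G, B * ε ≤ ∑ ℓ, (∫ ω, φ g ω ∂ν - φ g (ws ℓ))} ≤
      G.card * ENNReal.ofReal (exp (-2 * B * ε ^ 2)) := by
  calc _ ≤ (Measure.pi fun _ : Fin B => ν)
          (⋃ g ∈ G, {ws | B * ε ≤ ∑ ℓ, (∫ ω, φ g ω ∂ν - φ g (ws ℓ))}) :=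
        measure_mono <| by rintro _ ⟨g, hg, hws⟩; exact mem_biUnion hg hws
    _ ≤ ∑ g ∈ G, ENNReal.ofReal (exp (-2 * B * ε ^ 2)) := by
        refine (measure_biUnion_finset_le G _).trans (sum_le_sum fun g hg => ?_)
        rw [← ofReal_measureReal]
        exact ENNReal.ofReal_le_ofReal
          (measureReal_pi_mul_le_sum_integral_sub_le ν B (hφ g hg) (hφ01 g hg) hε)
    _ = G.card * ENNReal.ofReal (exp (-2 * B * ε ^ 2)) := by rw [sum_const, nsmul_eq_mul]

end Concentration

theorem integral_le_mean_add_of_abs_sub_le {Ω : Type*} [MeasurableSpace Ω] {ν : Measure Ω}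
    [IsProbabilityMeasure ν] {φ ψ : Ω → ℝ} (hφ : Integrable φ ν) (hψ : Integrable ψ ν) {a : ℝ}
    (hφψ : ∀ ω, |φ ω - ψ ω| ≤ a) {B : ℕ} (hB : 0 < B) (ws : Fin B → Ω) {ε : ℝ}
    (hdev : ∑ ℓ, (∫ ω, ψ ω ∂ν - ψ (ws ℓ)) < B * ε) :
    ∫ ω, φ ω ∂ν ≤ 1 / B * ∑ ℓ, φ (ws ℓ) + 2 * a + ε := by
  have hint : ∫ ω, φ ω ∂ν ≤ ∫ ω, ψ ω ∂ν + a := by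
    calc ∫ ω, φ ω ∂ν ≤ ∫ ω, (ψ ω + a) ∂ν :=
          integral_mono hφ (hψ.add (integrable_const a)) fun ω => by
            linarith [(abs_le.1 (hφψ ω)).2]
      _ = ∫ ω, ψ ω ∂ν + a := by simp [integral_add hψ (integrable_const a)]
  have hsum : ∑ ℓ, ψ (ws ℓ) ≤ ∑ ℓ, φ (ws ℓ) + B * a := by
    calc ∑ ℓ, ψ (ws ℓ) ≤ ∑ ℓ, (φ (ws ℓ) + a) :=
          sum_le_sum fun ℓ _ => by linarith [(abs_le.1 (hφψ (ws ℓ))).1]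
      _ = ∑ ℓ, φ (ws ℓ) + B * a := by simp [sum_add_distrib]
  have hmean : B * ∫ ω, ψ ω ∂ν < ∑ ℓ, ψ (ws ℓ) + B * ε := by
    simp only [sum_sub_distrib, sum_const, card_univ, Fintype.card_fin, nsmul_eq_mul] at hdev
    linarith
  have hBpos : (0 : ℝ) < B := Nat.cast_pos.2 hB
  calc ∫ ω, φ ω ∂ν ≤ (∑ ℓ, φ (ws ℓ) + B * (2 * a + ε)) / B := by
        rw [le_div_iff₀ hBpos]
        linarith [mul_le_mul_of_nonneg_left hint hBpos.le]
    _ = 1 / B * ∑ ℓ, φ (ws ℓ) + 2 * a + ε := by field_simp; ring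

theorem mul_exp_neg_two_mul_sq_le {N B δ : ℝ} (hN : 1 ≤ N) (hB : 0 < B) (hδ0 : 0 < δ)
    (hδ1 : δ ≤ 1) :
    N * exp (-2 * B * (√(2 * log N / B) + √(log (1 / δ) / B)) ^ 2) ≤ δ := by
  have hlogN : 0 ≤ log N := log_nonneg hN
  have hlogδ : 0 ≤ log (1 / δ) := log_nonneg (one_le_one_div hδ0 hδ1)
  have hsq : 2 * B * (√(2 * log N / B) ^ 2 + √(log (1 / δ) / B) ^ 2) =
      4 * log N + 2 * log (1 / δ) := by
    rw [sq_sqrt (by positivity), sq_sqrt (by positivity)]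
    field_simp
    ring
  have hlog : log (δ / N) = -(log N + log (1 / δ)) := by
    rw [log_div hδ0.ne' (by positivity), one_div, log_inv]
    ring
  have hexp : -2 * B * (√(2 * log N / B) + √(log (1 / δ) / B)) ^ 2 ≤ log (δ / N) := by
    nlinarith [mul_nonneg (sqrt_nonneg (2 * log N / B)) (sqrt_nonneg (log (1 / δ) / B))]
  calc N * exp _ ≤ N * exp (log (δ / N)) := by gcongr
    _ = δ := by rw [exp_log (by positivity)]; field_simp

theorem ofReal_one_sub_le_of_measure_compl_le {α : Type*} [MeasurableSpace α] {μ : Measure α}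
    [IsProbabilityMeasure μ] {s : Set α} {δ : ℝ} (hδ : 0 ≤ δ) (h : μ sᶜ ≤ ENNReal.ofReal δ) :
    ENNReal.ofReal (1 - δ) ≤ μ s := by
  rw [ENNReal.ofReal_sub _ hδ, ENNReal.ofReal_one, tsub_le_iff_right]
  calc 1 = μ (s ∪ sᶜ) := by rw [union_compl_self, measure_univ]
    _ ≤ μ s + μ sᶜ := measure_union_le s sᶜ
    _ ≤ μ s + ENNReal.ofReal δ := by gcongr

theorem dp_generalization_bound :
    ∃ C : ℝ, 0 < C ∧
      ∀ (X : Type) [MeasurableSpace X], ∀ (S B : ℕ), 1 ≤ S → 1 ≤ B →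
      ∀ (ν : Measure (Fin S → X × Bool × Bool)) [IsProbabilityMeasure ν],
      ∀ (H : Set (X → ℝ)), H.Nonempty → H.Countable →
        (∀ h ∈ H, Measurable h) → (∀ h ∈ H, ∀ x, 0 ≤ h x ∧ h x ≤ 1) →
      ∀ (μbar : ℝ), 0 < μbar →
      ∀ (N : ℕ), 1 ≤ N →
      ∀ (G : Finset (X → ℝ)),
        (∀ g ∈ G, Measurable g) → (∀ g ∈ G, ∀ x, 0 ≤ g x ∧ g x ≤ 1) →
        G.card ≤ N →
        (∀ h ∈ H, ∃ g ∈ G, ∀ x, |h x - g x| ≤ μbar / (S : ℝ)) →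
      ∀ δ : ℝ, 0 < δ → δ < 1 →
        ENNReal.ofReal (1 - δ) ≤
          (Measure.pi fun _ : Fin B => ν)
            {ws : Fin B → (Fin S → X × Bool × Bool) |
              ∀ h ∈ H,
                ∫ w, constDP h w ∂ν ≤
                  (1 / (B : ℝ)) * ∑ ℓ : Fin B, constDP h (ws ℓ)
                    + 2 * (μbar + Real.sqrt (2 * Real.log (N : ℝ) / (B : ℝ)))
                    + C * Real.sqrt (Real.log (1 / δ) / (B : ℝ))} := by
  refine ⟨1, one_pos, ?_⟩
  intro X _ S B hS hB ν _ H _ _ hHmeas hHbd μbar hμ N hN G hGmeas hGbd hGcard hcov δ hδ0 hδ1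
  set ε := √(2 * log N / B) + √(log (1 / δ) / B) with hε
  refine ofReal_one_sub_le_of_measure_compl_le hδ0.le ?_
  calc _ ≤ (Measure.pi fun _ : Fin B => ν)
          {ws | ∃ g ∈ G, B * ε ≤ ∑ ℓ, (∫ w, constDP g w ∂ν - constDP g (ws ℓ))} := by
        refine measure_mono (compl_subset_comm.2 fun ws hws h hh => ?_)
        obtain ⟨g, hg, hhg⟩ := hcov h hh
        simp only [mem_compl_iff, mem_ofPred_eq, not_exists, not_and, not_le] at hws
        have := integral_le_mean_add_of_abs_sub_le (integrable_constDP (hHmeas h hh) (hHbd h hh))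
          (integrable_constDP (hGmeas g hg) (hGbd g hg))
          (abs_constDP_sub_le (by positivity) hhg) hB ws (hws g hg)
        rw [mul_div_cancel₀ _ (by positivity)] at this
        linarith [sqrt_nonneg (2 * log N / B)]
    _ ≤ G.card * ENNReal.ofReal (exp (-2 * B * ε ^ 2)) :=
        measure_pi_exists_mul_le_sum_integral_sub_le ν B G
          (fun g hg => measurable_constDP (hGmeas g hg)) (fun g hg => constDP_mem_Icc (hGbd g hg))
          (by positivity)
    _ ≤ N * ENNReal.ofReal (exp (-2 * B * ε ^ 2)) := by gcongr
    _ ≤ ENNReal.ofReal δ := by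
        rw [← ENNReal.ofReal_natCast, ← ENNReal.ofReal_mul (by positivity)]
        exact ENNReal.ofReal_le_ofReal (mul_exp_neg_two_mul_sq_le (by exact_mod_cast hN)
          (by exact_mod_cast hB) hδ0 hδ1.le)
end

section
/- There exists a constant C > 0 such that the following holds. Let X be a measurable space, B ≥ 1 a natural number, L ≥ 1 a real number, and let ν be a probability measure on X × Bool. Let F be a nonempty countable set of measurable functions f : X → ℝ with |f x| ≤ L for all x. Let μ̄ > 0, let N ≥ 1, and let G be a finite set of measurable functions g : X → ℝ with |g x| ≤ L for all x, with card(G) ≤ N, such that for every f ∈ F there is g ∈ G with |f x − g x| ≤ μ̄ for all x ∈ X. Then for every δ ∈ (0,1), the product measure ν^B on Fin B → (X × Bool) assigns measure at least 1 − δ to the set of samples ((x₁,y₁), …, (x_B,y_B)) such that for every f ∈ F: ∫ ℓ_CE(f x, y) dν(x, y) ≤ (1/B) ∑_{i=1}^{B} ℓ_CE(f x_i, y_i) + 2·(μ̄ + L·√(2·log N / B)) + C·L·√(log(1/δ)/B). -/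
open MeasureTheory

/-- The sigmoid function. -/
noncomputable def sigmoid (t : ℝ) : ℝ := 1 / (1 + Real.exp (-t))

/-- The sigmoid cross-entropy loss of a real-valued score `t` against a
(real-valued) label `y`. -/
noncomputable def lCE (t y : ℝ) : ℝ :=
  -y * Real.log (sigmoid t) - (1 - y) * Real.log (1 - sigmoid t)

/-! On Boolean labels the cross-entropy loss is `softplus (±t)`, which is `1`-Lipschitz in the
score `t` and takes values in `[0, 2L]` when `|t| ≤ L`. For each `g` in the cover `G`,
Hoeffding's inequality bounds the probability that the empirical risk of `g` falls below its
risk by `ε = 2L (√(2 log N / B) + √(log (1/δ) / B))` by `exp (-2Bε² / (2L)²) ≤ δ / N`, and a union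
bound over the at most `N` elements of `G` leaves an event of probability at least `1 - δ`.
On it, every `f ∈ F` is uniformly `μ̄`-close to some `g ∈ G`, which moves both the risk and the
empirical risk by at most `μ̄`. This gives the bound with `C = 2`. -/

open Real

noncomputable def softplus (t : ℝ) : ℝ := log (1 + exp t)

lemma softplus_nonneg (t : ℝ) : 0 ≤ softplus t :=
  log_nonneg (by linarith [exp_pos t])

lemma softplus_le_add_abs_sub (s t : ℝ) : softplus s ≤ softplus t + |s - t| := by
  have hexp : exp s ≤ exp |s - t| * exp t := by
    rw [← exp_add, exp_le_exp]; linarith [le_abs_self (s - t)]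
  have hmono : 1 + exp s ≤ exp |s - t| * (1 + exp t) := by
    nlinarith [one_le_exp (abs_nonneg (s - t)), exp_pos t]
  calc softplus s ≤ log (exp |s - t| * (1 + exp t)) := log_le_log (by positivity) hmono
    _ = softplus t + |s - t| := by
      rw [log_mul (exp_ne_zero _) (by positivity), log_exp, add_comm]; rfl

lemma lipschitzWith_softplus : LipschitzWith 1 softplus :=
  LipschitzWith.of_le_add fun s t => by
    simpa only [Real.dist_eq] using softplus_le_add_abs_sub s t

lemma softplus_le_abs_add_one (t : ℝ) : softplus t ≤ |t| + 1 := by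
  have hlog2 : log 2 ≤ 1 := by linarith [log_le_sub_one_of_pos (zero_lt_two' ℝ)]
  calc softplus t ≤ softplus 0 + |t - 0| := softplus_le_add_abs_sub t 0
    _ ≤ |t| + 1 := by norm_num [softplus]; linarith

lemma lCE_bval (t : ℝ) (b : Bool) : lCE t (bval b) = softplus (if b then -t else t) := by
  have hσ : _root_.sigmoid t = (1 + exp (-t))⁻¹ := by simp [_root_.sigmoid]
  have h1σ : 1 - _root_.sigmoid t = (1 + exp t)⁻¹ := by
    rw [hσ, ← Real.sigmoid_def, ← Real.sigmoid_neg, Real.sigmoid_def, neg_neg]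
  cases b <;> simp only [lCE, bval] <;> rw [h1σ, hσ] <;> simp [softplus, log_inv]

section CrossEntropyLoss

variable {X : Type*}

noncomputable def ceLoss (f : X → ℝ) (p : X × Bool) : ℝ := lCE (f p.1) (bval p.2)

lemma ceLoss_eq (f : X → ℝ) (p : X × Bool) :
    ceLoss f p = softplus (if p.2 then -f p.1 else f p.1) :=
  lCE_bval _ _

lemma abs_ceLoss_sub_ceLoss_le (f g : X → ℝ) (p : X × Bool) :
    |ceLoss f p - ceLoss g p| ≤ |f p.1 - g p.1| := by
  obtain ⟨x, b⟩ := p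
  have h := lipschitzWith_softplus.dist_le_mul (if b then -f x else f x) (if b then -g x else g x)
  rw [ceLoss_eq, ceLoss_eq]
  cases b <;> simpa [Real.dist_eq, abs_sub_comm, neg_add_eq_sub] using h

lemma ceLoss_mem_Icc {f : X → ℝ} {L : ℝ} (hL : 1 ≤ L) (hf : ∀ x, |f x| ≤ L) (p : X × Bool) :
    ceLoss f p ∈ Set.Icc 0 (2 * L) := by
  rw [ceLoss_eq]
  refine ⟨softplus_nonneg _, (softplus_le_abs_add_one _).trans ?_⟩
  have := hf p.1
  cases p.2 <;> simp <;> linarith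

lemma Measurable.ceLoss [MeasurableSpace X] {f : X → ℝ} (hf : Measurable f) :
    Measurable (ceLoss f) := by
  simp only [funext (ceLoss_eq f)]
  exact lipschitzWith_softplus.continuous.measurable.comp <|
    Measurable.ite (measurableSet_eq_fun measurable_snd measurable_const)
      (hf.comp measurable_fst).neg (hf.comp measurable_fst)

lemma integrable_ceLoss [MeasurableSpace X] {ν : Measure (X × Bool)} [IsFiniteMeasure ν]
    {f : X → ℝ} {L : ℝ} (hL : 1 ≤ L) (hm : Measurable f) (hf : ∀ x, |f x| ≤ L) :
    Integrable (ceLoss f) ν :=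
  Integrable.of_mem_Icc _ _ hm.ceLoss.aemeasurable (ae_of_all _ (ceLoss_mem_Icc hL hf))

end CrossEntropyLoss

section EmpiricalMean

open ProbabilityTheory

variable {Y : Type*} [MeasurableSpace Y]

noncomputable def empiricalMean {n : ℕ} (ℓ : Y → ℝ) (s : Fin n → Y) : ℝ :=
  (1 / (n : ℝ)) * ∑ i, ℓ (s i)

lemma measureReal_integral_sub_empiricalMean_ge_le (ν : Measure Y) [IsProbabilityMeasure ν]
    {ℓ : Y → ℝ} (hℓ : Measurable ℓ) {a b : ℝ} (hab : ∀ y, ℓ y ∈ Set.Icc a b) {n : ℕ}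
    (hn : n ≠ 0) {ε : ℝ} (hε : 0 ≤ ε) :
    (Measure.pi fun _ : Fin n => ν).real {s | ε ≤ ∫ y, ℓ y ∂ν - empiricalMean ℓ s} ≤
      exp (-2 * n * ε ^ 2 / (b - a) ^ 2) := by
  set m := ∫ y, ℓ y ∂ν
  have hn' : (0 : ℝ) < n := by positivity
  have hindep : iIndepFun (fun i (s : Fin n → Y) => m - ℓ (s i)) (Measure.pi fun _ => ν) :=
    iIndepFun_pi (X := fun _ y => m - ℓ y) fun _ => (measurable_const.sub hℓ).aemeasurable
  have hsubG (i : Fin n) : HasSubgaussianMGF (fun s : Fin n → Y => m - ℓ (s i))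
      ((‖b - a‖₊ / 2) ^ 2) (Measure.pi fun _ => ν) := by
    have hmean : ∫ s, ℓ (s i) ∂(Measure.pi fun _ => ν) = m :=
      integral_comp_eval hℓ.aestronglyMeasurable
    have := (hasSubgaussianMGF_of_mem_Icc (μ := Measure.pi fun _ => ν)
      (hℓ.comp (measurable_pi_apply i)).aemeasurable (ae_of_all _ fun s => hab (s i))).neg
    convert this using 1
    ext s
    simp [hmean]
  have hset : {s : Fin n → Y | ε ≤ m - empiricalMean ℓ s} =
      {s | n * ε ≤ ∑ i, (m - ℓ (s i))} := by
    ext s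
    simp only [Set.mem_ofPred_eq, empiricalMean, Finset.sum_sub_distrib, Finset.sum_const,
      Finset.card_univ, Fintype.card_fin, nsmul_eq_mul]
    rw [← mul_le_mul_iff_of_pos_left hn']
    field_simp
  rw [hset]
  refine (HasSubgaussianMGF.measure_sum_ge_le_of_iIndepFun hindep (fun i _ => hsubG i)
    (by positivity)).trans_eq ?_
  congr 1
  rw [NNReal.coe_sum]
  simp only [Finset.sum_const, Finset.card_univ, Fintype.card_fin, nsmul_eq_mul, NNReal.coe_pow,
    NNReal.coe_div, NNReal.coe_ofNat, coe_nnnorm, Real.norm_eq_abs, sq_abs, div_pow]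
  field_simp

lemma integral_sub_empiricalMean_le_of_abs_sub_le (ν : Measure Y) [IsProbabilityMeasure ν]
    {u v : Y → ℝ} (hu : Integrable u ν) (hv : Integrable v ν) {c : ℝ}
    (huv : ∀ y, |u y - v y| ≤ c) {n : ℕ} (hn : n ≠ 0) (s : Fin n → Y) :
    ∫ y, u y ∂ν - empiricalMean u s ≤ ∫ y, v y ∂ν - empiricalMean v s + 2 * c := by
  have hintegral : ∫ y, u y ∂ν ≤ ∫ y, v y ∂ν + c :=
    calc ∫ y, u y ∂ν ≤ ∫ y, (v y + c) ∂ν :=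
          integral_mono hu (hv.add (integrable_const c))
            fun y => by linarith [(abs_le.1 (huv y)).2]
      _ = ∫ y, v y ∂ν + c := by simp [integral_add hv (integrable_const c)]
  have hsum : ∑ i, v (s i) ≤ ∑ i, u (s i) + n * c :=
    calc ∑ i, v (s i) ≤ ∑ i, (u (s i) + c) :=
          Finset.sum_le_sum fun i _ => by linarith [(abs_le.1 (huv (s i))).1]
      _ = ∑ i, u (s i) + n * c := by simp [Finset.sum_add_distrib]
  have hmean : empiricalMean v s ≤ empiricalMean u s + c := by
    have hn' : (0 : ℝ) < n := by positivity
    calc empiricalMean v s ≤ (1 / (n : ℝ)) * (∑ i, u (s i) + n * c) := by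
          unfold empiricalMean; gcongr
      _ = empiricalMean u s + c := by unfold empiricalMean; field_simp
  linarith

end EmpiricalMean

lemma ofReal_one_sub_le_of_compl_biUnion_subset {Ω ι : Type*} [MeasurableSpace Ω]
    {μ : Measure Ω} [IsProbabilityMeasure μ] {G : Finset ι} {E : ι → Set Ω} {S : Set Ω}
    {η δ : ℝ} (hE : ∀ g ∈ G, μ.real (E g) ≤ η) (hδ : G.card * η ≤ δ)
    (hS : (⋃ g ∈ G, E g)ᶜ ⊆ S) :
    ENNReal.ofReal (1 - δ) ≤ μ S := by
  set U := ⋃ g ∈ G, E g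
  have hU : μ.real U ≤ δ :=
    calc μ.real U ≤ ∑ g ∈ G, μ.real (E g) := measureReal_biUnion_finset_le G E
      _ ≤ ∑ g ∈ G, η := Finset.sum_le_sum hE
      _ ≤ δ := by simpa using hδ
  have hcover : 1 ≤ μ.real U + μ.real S :=
    calc 1 = μ.real (U ∪ S) := by
          rw [Set.compl_subset_iff_union.1 hS, probReal_univ]
      _ ≤ μ.real U + μ.real S := measureReal_union_le U S
  rw [← ofReal_measureReal]
  exact ENNReal.ofReal_le_ofReal (by linarith)

lemma exp_neg_two_mul_sqrt_add_sqrt_sq_le {n N δ : ℝ} (hn : 0 < n) (hN : 1 ≤ N) (hδ : 0 < δ)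
    (hδ1 : δ ≤ 1) :
    exp (-2 * n * (√(2 * log N / n) + √(log (1 / δ) / n)) ^ 2) ≤ δ / N := by
  have hlogN : 0 ≤ log N := log_nonneg hN
  have hlogδ : 0 ≤ log (1 / δ) := log_nonneg (by rw [le_div_iff₀ hδ]; linarith)
  have hsq : 2 * log N / n + log (1 / δ) / n ≤ (√(2 * log N / n) + √(log (1 / δ) / n)) ^ 2 := by
    rw [add_sq, sq_sqrt (by positivity), sq_sqrt (by positivity)]
    nlinarith [sqrt_nonneg (2 * log N / n), sqrt_nonneg (log (1 / δ) / n)]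
  have hexponent : -2 * n * (√(2 * log N / n) + √(log (1 / δ) / n)) ^ 2 ≤ log (δ / N) := by
    have hscale : 2 * n * (2 * log N / n + log (1 / δ) / n) = 4 * log N + 2 * log (1 / δ) := by
      field_simp
      ring
    have := mul_le_mul_of_nonneg_left hsq (by positivity : (0 : ℝ) ≤ 2 * n)
    have hlog_inv : log (1 / δ) = -log δ := by rw [one_div, log_inv]
    rw [log_div hδ.ne' (by positivity)]
    linarith
  calc _ ≤ exp (log (δ / N)) := exp_le_exp.2 hexponent
    _ = δ / N := exp_log (by positivity)


theorem ce_generalization_bound :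
    ∃ C : ℝ, 0 < C ∧
      ∀ (X : Type) [MeasurableSpace X], ∀ (B : ℕ), 1 ≤ B →
      ∀ (L : ℝ), 1 ≤ L →
      ∀ (ν : Measure (X × Bool)) [IsProbabilityMeasure ν],
      ∀ (F : Set (X → ℝ)), F.Nonempty → F.Countable →
        (∀ f ∈ F, Measurable f) → (∀ f ∈ F, ∀ x, |f x| ≤ L) →
      ∀ (μbar : ℝ), 0 < μbar →
      ∀ (N : ℕ), 1 ≤ N →
      ∀ (G : Finset (X → ℝ)),
        (∀ g ∈ G, Measurable g) → (∀ g ∈ G, ∀ x, |g x| ≤ L) →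
        G.card ≤ N →
        (∀ f ∈ F, ∃ g ∈ G, ∀ x, |f x - g x| ≤ μbar) →
      ∀ δ : ℝ, 0 < δ → δ < 1 →
        ENNReal.ofReal (1 - δ) ≤
          (Measure.pi fun _ : Fin B => ν)
            {s : Fin B → X × Bool |
              ∀ f ∈ F,
                ∫ p, lCE (f p.1) (bval p.2) ∂ν ≤
                  (1 / (B : ℝ)) * ∑ i : Fin B, lCE (f (s i).1) (bval (s i).2)
                    + 2 * (μbar + L * Real.sqrt (2 * Real.log (N : ℝ) / (B : ℝ)))
                    + C * L * Real.sqrt (Real.log (1 / δ) / (B : ℝ))} := by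
  refine ⟨2, two_pos, ?_⟩
  intro X _ B hB L hL ν _ F _ _ hFmeas hFbdd μbar _ N hN G hGmeas hGbdd hGcard hcover δ hδ0 hδ1
  have hB0 : B ≠ 0 := by omega
  set r := √(2 * Real.log N / B) + √(Real.log (1 / δ) / B)
  set ε := 2 * L * r
  have hε : 0 ≤ ε := by positivity
  refine ofReal_one_sub_le_of_compl_biUnion_subset (G := G) (η := δ / N)
    (E := fun g => {s | ε ≤ ∫ p, ceLoss g p ∂ν - empiricalMean (ceLoss g) s}) ?_ ?_ ?_
  · intro g hg
    calc _ ≤ Real.exp (-2 * B * ε ^ 2 / (2 * L - 0) ^ 2) :=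
          measureReal_integral_sub_empiricalMean_ge_le ν (hGmeas g hg).ceLoss
            (ceLoss_mem_Icc hL (hGbdd g hg)) hB0 hε
      _ = Real.exp (-2 * B * r ^ 2) := by
            rw [sub_zero]; congr 1; simp only [ε]; field_simp
      _ ≤ δ / N := exp_neg_two_mul_sqrt_add_sqrt_sq_le (by positivity) (by exact_mod_cast hN)
          hδ0 hδ1.le
  · calc (G.card : ℝ) * (δ / N) ≤ N * (δ / N) := by gcongr
      _ = δ := by field_simp
  · intro s hs f hf
    obtain ⟨g, hg, hfg⟩ := hcover f hf
    have hgood : ∫ p, ceLoss g p ∂ν - empiricalMean (ceLoss g) s < ε := by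
      simp only [Set.mem_compl_iff, Set.mem_iUnion, not_exists, Set.mem_ofPred_eq, not_le] at hs
      exact hs g hg
    have hcompare := integral_sub_empiricalMean_le_of_abs_sub_le ν
      (integrable_ceLoss hL (hFmeas f hf) (hFbdd f hf))
      (integrable_ceLoss hL (hGmeas g hg) (hGbdd g hg))
      (fun p => (abs_ceLoss_sub_ceLoss_le f g p).trans (hfg p.1)) hB0 s
    change ∫ p, ceLoss f p ∂ν ≤ empiricalMean (ceLoss f) s + _ + _
    linarith
end

section
/- Let Z be a type, B ≥ 1 a natural number, z : Fin B → Z a fixed sample, L ≥ 0 and μ̄ ≥ 0 real numbers. Let F be a nonempty set of functions Z → ℝ with |f (z i)| ≤ L for every f ∈ F and every i, and let G be a finite set of functions Z → ℝ with |g (z i)| ≤ L for every g ∈ G and every i, with card(G) = N ≥ 1, such that for every f ∈ F there is g ∈ G with |f (z i) − g (z i)| ≤ μ̄ for all i. Then the empirical Rademacher complexity of F on z satisfies (1/B) · 2^{−B} · ∑_{σ : Fin B → Bool} sup_{f ∈ F} ∑_{i} ε(σ i) · f (z i) ≤ μ̄ + L·√(2·log N / B), where ε(true) = 1 and ε(false)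 = −1, and the supremum is the real supremum of the (bounded, nonempty) set {∑_i ε(σ i)·f(z i) : f ∈ F}. -/
/-!
Replacing each `f ∈ F` by a `μ̄`-close `g` from the finite cover `G` moves every signed sum by at
most `B μ̄`, so it suffices to bound the Rademacher average of the finite class `G` (Massart's
lemma). For a single `g`, the sum over sign vectors of `exp (t · ∑ εᵢ gᵢ)` factors as
`∏ 2 cosh (t gᵢ) ≤ 2^B exp (t² B L² / 2)`. Jensen's inequality for `exp` and bounding the
exponential of a maximum by the sum over `G` give `t · E sup ≤ log N + t² B L² / 2` for every
`t > 0`, and optimising in `t` yields `E sup ≤ L √(2 B log N)`.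
-/
open Finset Real Filter Topology

lemma le_sqrt_of_forall_le_div_add {A c d : ℝ} (hc : 0 ≤ c) (hd : 0 ≤ d)
    (h : ∀ t > 0, A ≤ c / t + t * d / 2) : A ≤ √(2 * c * d) := by
  have hlim : Tendsto (fun ε : ℝ => √((2 * c + ε) * (d + ε))) (𝓝[>] 0) (𝓝 √(2 * c * d)) := by
    have hcont : Continuous fun ε : ℝ => √((2 * c + ε) * (d + ε)) := by fun_prop
    simpa using (hcont.tendsto 0).mono_left nhdsWithin_le_nhds
  refine ge_of_tendsto hlim (eventually_nhdsWithin_of_forall fun ε (hε : 0 < ε) => ?_)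
  -- `p / q` regularises the minimiser `√(2c/d)` of `c / t + t d / 2` (undefined if `d = 0`)
  set p := √(2 * c + ε)
  set q := √(d + ε)
  have hp : 0 < p := sqrt_pos.2 (by positivity)
  have hq : 0 < q := sqrt_pos.2 (by positivity)
  have hp2 : p ^ 2 = 2 * c + ε := sq_sqrt (by positivity)
  have hq2 : q ^ 2 = d + ε := sq_sqrt (by positivity)
  calc A ≤ c / (p / q) + p / q * d / 2 := h _ (div_pos hp hq)
    _ ≤ p * q := by
      field_simp
      nlinarith [mul_pos hp hq]
    _ = √((2 * c + ε) * (d + ε)) := (sqrt_mul (by positivity) _).symm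

section RademacherSum

variable {ι : Type*} [Fintype ι]

def rademacherSum (σ : ι → Bool) (a : ι → ℝ) : ℝ :=
  ∑ i, (if σ i then 1 else -1) * a i

lemma rademacherSum_le_add_of_abs_sub_le (σ : ι → Bool) {a b : ι → ℝ} {c : ℝ}
    (h : ∀ i, |a i - b i| ≤ c) :
    rademacherSum σ a ≤ rademacherSum σ b + Fintype.card ι * c := by
  have hterm (i : ι) : (if σ i then 1 else -1) * a i ≤ (if σ i then 1 else -1) * b i + c := by
    have := h i
    cases σ i <;> simp only [Bool.false_eq_true, if_true, if_false] <;>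
      linarith [le_abs_self (a i - b i), neg_abs_le (a i - b i)]
  calc rademacherSum σ a ≤ ∑ i, ((if σ i then 1 else -1) * b i + c) :=
        sum_le_sum fun i _ => hterm i
    _ = rademacherSum σ b + Fintype.card ι * c := by
        rw [sum_add_distrib, sum_const, card_univ, nsmul_eq_mul]; rfl

lemma sum_exp_mul_rademacherSum [DecidableEq ι] (t : ℝ) (a : ι → ℝ) :
    ∑ σ : ι → Bool, exp (t * rademacherSum σ a) = ∏ i, 2 * cosh (t * a i) := by
  have hsplit (σ : ι → Bool) :
      exp (t * rademacherSum σ a) = ∏ i, exp (t * ((if σ i then 1 else -1) * a i)) := by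
    rw [rademacherSum, mul_sum, exp_sum]
  simp_rw [hsplit]
  rw [← Fintype.prod_sum fun i (b : Bool) => exp (t * ((if b then (1 : ℝ) else -1) * a i))]
  refine prod_congr rfl fun i _ => ?_
  rw [Fintype.sum_bool, cosh_eq]
  simp only [if_true, Bool.false_eq_true, if_false, one_mul, neg_one_mul, mul_neg]
  ring

lemma sum_exp_mul_rademacherSum_le [DecidableEq ι] (t : ℝ) {a : ι → ℝ} {L : ℝ}
    (ha : ∀ i, |a i| ≤ L) :
    ∑ σ : ι → Bool, exp (t * rademacherSum σ a)
      ≤ 2 ^ Fintype.card ι * exp (t ^ 2 * (Fintype.card ι * L ^ 2) / 2) := by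
  have hcosh (i : ι) : 2 * cosh (t * a i) ≤ 2 * exp ((t * L) ^ 2 / 2) := by
    have hsq : (t * a i) ^ 2 ≤ (t * L) ^ 2 := by
      rw [mul_pow, mul_pow]
      exact mul_le_mul_of_nonneg_left (sq_le_sq.2 ((ha i).trans (le_abs_self L))) (sq_nonneg t)
    gcongr
    exact (cosh_le_exp_half_sq _).trans (exp_le_exp.2 (by linarith))
  calc ∑ σ : ι → Bool, exp (t * rademacherSum σ a)
      ≤ ∏ _i : ι, 2 * exp ((t * L) ^ 2 / 2) := by
        rw [sum_exp_mul_rademacherSum]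
        exact prod_le_prod (fun i _ => by positivity) fun i _ => hcosh i
    _ = 2 ^ Fintype.card ι * exp (t ^ 2 * (Fintype.card ι * L ^ 2) / 2) := by
        rw [prod_const, card_univ, mul_pow, ← exp_nat_mul]
        ring_nf

lemma exp_mul_sup'_le_sum {α : Type*} {G : Finset α} (hG : G.Nonempty) (f : α → ℝ) (t : ℝ) :
    exp (t * G.sup' hG f) ≤ ∑ g ∈ G, exp (t * f g) := by
  obtain ⟨g, hg, hgmax⟩ := G.exists_mem_eq_sup' hG f
  rw [hgmax]
  exact single_le_sum (f := fun g => exp (t * f g)) (fun _ _ => (exp_pos _).le) hg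

lemma average_sup'_rademacherSum_le [DecidableEq ι] {α : Type*} {G : Finset α}
    (hG : G.Nonempty) (a : α → ι → ℝ) {L : ℝ} (ha : ∀ g ∈ G, ∀ i, |a g i| ≤ L) {t : ℝ}
    (ht : 0 < t) :
    1 / 2 ^ Fintype.card ι * ∑ σ : ι → Bool, G.sup' hG (fun g => rademacherSum σ (a g))
      ≤ log #G / t + t * (Fintype.card ι * L ^ 2) / 2 := by
  set n := Fintype.card ι
  set M : (ι → Bool) → ℝ := fun σ => G.sup' hG fun g => rademacherSum σ (a g)
  have hjensen : exp (t * (1 / 2 ^ n * ∑ σ, M σ)) ≤ ∑ σ : ι → Bool, 1 / 2 ^ n * exp (t * M σ) := by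
    have hweights : ∑ _σ : ι → Bool, (1 / 2 ^ n : ℝ) = 1 := by simp [n]
    simpa [mul_sum, mul_left_comm] using convexOn_exp.map_sum_le (t := univ)
      (w := fun _ => (1 / 2 ^ n : ℝ)) (p := fun σ => t * M σ) (fun _ _ => by positivity)
      hweights (fun _ _ => Set.mem_univ _)
  have hexp : exp (t * (1 / 2 ^ n * ∑ σ, M σ)) ≤ #G * exp (t ^ 2 * (n * L ^ 2) / 2) :=
    calc exp (t * (1 / 2 ^ n * ∑ σ, M σ))
        ≤ ∑ σ : ι → Bool, 1 / 2 ^ n * exp (t * M σ) := hjensen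
      _ ≤ ∑ σ : ι → Bool, 1 / 2 ^ n * ∑ g ∈ G, exp (t * rademacherSum σ (a g)) := by
          gcongr with σ
          exact exp_mul_sup'_le_sum hG _ t
      _ = 1 / 2 ^ n * ∑ σ : ι → Bool, ∑ g ∈ G, exp (t * rademacherSum σ (a g)) :=
          (mul_sum _ _ _).symm
      _ = 1 / 2 ^ n * ∑ g ∈ G, ∑ σ : ι → Bool, exp (t * rademacherSum σ (a g)) := by
          rw [sum_comm]
      _ ≤ 1 / 2 ^ n * ∑ _g ∈ G, 2 ^ n * exp (t ^ 2 * (n * L ^ 2) / 2) := by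
          gcongr with g hg
          exact sum_exp_mul_rademacherSum_le t (ha g hg)
      _ = #G * exp (t ^ 2 * (n * L ^ 2) / 2) := by
          rw [sum_const, nsmul_eq_mul]
          field_simp
  have hcard : (0 : ℝ) < #G := by exact_mod_cast hG.card_pos
  have hlog : t * (1 / 2 ^ n * ∑ σ, M σ) ≤ log #G + t ^ 2 * (n * L ^ 2) / 2 := by
    rwa [← exp_le_exp, exp_add, exp_log hcard]
  rw [div_add_div _ _ ht.ne' two_ne_zero, le_div_iff₀ (by positivity)]
  nlinarith

lemma average_sup'_rademacherSum_le_sqrt [DecidableEq ι] {α : Type*} {G : Finset α}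
    (hG : G.Nonempty) (a : α → ι → ℝ) {L : ℝ} (ha : ∀ g ∈ G, ∀ i, |a g i| ≤ L) :
    1 / 2 ^ Fintype.card ι * ∑ σ : ι → Bool, G.sup' hG (fun g => rademacherSum σ (a g))
      ≤ √(2 * log #G * (Fintype.card ι * L ^ 2)) :=
  le_sqrt_of_forall_le_div_add (log_natCast_nonneg _) (by positivity) fun _ ht =>
    average_sup'_rademacherSum_le hG a ha ht

end RademacherSum

lemma csSup_image_le_sup'_add {α : Type*} {F : Set α} (hF : F.Nonempty) {G : Finset α}
    (hG : G.Nonempty) (φ : α → ℝ) {c : ℝ} (hcover : ∀ f ∈ F, ∃ g ∈ G, φ f ≤ φ g + c) :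
    sSup (φ '' F) ≤ G.sup' hG φ + c := by
  refine csSup_le (hF.image φ) ?_
  rintro _ ⟨f, hf, rfl⟩
  obtain ⟨g, hg, hfg⟩ := hcover f hf
  exact hfg.trans (by gcongr; exact G.le_sup' φ hg)

theorem rademacher_covering_bound_general (Z : Type*) (B : ℕ) (hB : 1 ≤ B) (z : Fin B → Z)
    (L μbar : ℝ) (hL : 0 ≤ L)
    (F : Set (Z → ℝ)) (hF : F.Nonempty)
    (G : Finset (Z → ℝ)) (hGbd : ∀ g ∈ G, ∀ i, |g (z i)| ≤ L)
    (N : ℕ) (hN : 1 ≤ N) (hcard : G.card = N)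
    (hcover : ∀ f ∈ F, ∃ g ∈ G, ∀ i, |f (z i) - g (z i)| ≤ μbar) :
    (1 / (B : ℝ)) * (1 / 2 ^ B) *
        ∑ σ : Fin B → Bool,
          sSup ((fun f : Z → ℝ =>
            ∑ i, (if σ i then (1 : ℝ) else -1) * f (z i)) '' F) ≤
      μbar + L * Real.sqrt (2 * Real.log (N : ℝ) / (B : ℝ)) := by
  have hG : G.Nonempty := card_pos.1 (hcard ▸ hN)
  have hBpos : (0 : ℝ) < B := by exact_mod_cast hB
  set M : (Fin B → Bool) → ℝ := fun σ => G.sup' hG fun g => rademacherSum σ fun i => g (z i)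
  have hsup (σ : Fin B → Bool) :
      sSup ((fun f : Z → ℝ => rademacherSum σ fun i => f (z i)) '' F) ≤ M σ + B * μbar :=
    csSup_image_le_sup'_add hF hG _ fun f hf => by
      obtain ⟨g, hg, hfg⟩ := hcover f hf
      exact ⟨g, hg, by simpa using rademacherSum_le_add_of_abs_sub_le σ hfg⟩
  have hmassart : 1 / 2 ^ B * ∑ σ, M σ ≤ √(2 * log N * (B * L ^ 2)) := by
    simpa [hcard] using average_sup'_rademacherSum_le_sqrt hG (fun g i => g (z i)) hGbd
  calc _ ≤ 1 / (B : ℝ) * (1 / 2 ^ B) * ∑ σ, (M σ + B * μbar) := by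
        gcongr with σ
        exact hsup σ
    _ = μbar + 1 / B * (1 / 2 ^ B * ∑ σ, M σ) := by
        rw [sum_add_distrib, sum_const, card_univ, Fintype.card_fun, Fintype.card_bool,
          Fintype.card_fin, nsmul_eq_mul]
        push_cast
        field_simp
        ring
    _ ≤ μbar + 1 / B * √(2 * log N * (B * L ^ 2)) := by gcongr
    _ = μbar + L * √(2 * log N / B) := by
        rw [show 2 * log N * (B * L ^ 2) = 2 * log N / B * (B * L) ^ 2 by field_simp,
          sqrt_mul' _ (sq_nonneg _), sqrt_sq (by positivity)]
        field_simp

theorem rademacher_covering_bound (Z : Type*) (B : ℕ) (hB : 1 ≤ B) (z : Fin B → Z)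
    (L μbar : ℝ) (hL : 0 ≤ L) (hμ : 0 ≤ μbar)
    (F : Set (Z → ℝ)) (hF : F.Nonempty)
    (hFbd : ∀ f ∈ F, ∀ i, |f (z i)| ≤ L)
    (G : Finset (Z → ℝ)) (hGbd : ∀ g ∈ G, ∀ i, |g (z i)| ≤ L)
    (N : ℕ) (hN : 1 ≤ N) (hcard : G.card = N)
    (hcover : ∀ f ∈ F, ∃ g ∈ G, ∀ i, |f (z i) - g (z i)| ≤ μbar) :
    (1 / (B : ℝ)) * (1 / 2 ^ B) *
        ∑ σ : Fin B → Bool,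
          sSup ((fun f : Z → ℝ =>
            ∑ i, (if σ i then (1 : ℝ) else -1) * f (z i)) '' F) ≤
      μbar + L * Real.sqrt (2 * Real.log (N : ℝ) / (B : ℝ)) :=
  rademacher_covering_bound_general Z B hB z L μbar hL F hF G hGbd N hN hcard hcover
end

section
/- For every μ̄ ∈ (0,1) and every K > 0 there exist a natural number S ≥ 1, group labels a : Fin S → ℝ with a i ∈ {0,1} for all i, ∑_i a i ≥ 1 and ∑_i (1 − a i) ≥ 1, and predictions p, p̂ : Fin S → ℝ with 0 < p i ≤ 1 and 0 < p̂ i ≤ 1 for all i and |p i − p̂ i| ≤ μ̄ for all i, such that |r(p, a) − r(p̂, a)| ≥ K, where r(p, a) = ((∑_i a i · p i)/(∑_i a i)) / ((∑_i (1 − a i) · p i)/(∑_i (1 − a i))) is the disparate-impact group ratio. In particular, the disparate-impact ratio is not uniformly approximable: pointwise μ̄-close classifiers can have arbitrarily different disparate-impact ratios. -/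
/-- The disparate-impact group ratio of predictions `p` with respect to the
binary group labels `a`: the mean prediction on the group `{i | a i = 1}`
divided by the mean prediction on the group `{i | a i = 0}`. -/
noncomputable def diRatio {S : ℕ} (p a : Fin S → ℝ) : ℝ :=
  ((∑ i, a i * p i) / (∑ i, a i)) / ((∑ i, (1 - a i) * p i) / (∑ i, (1 - a i)))

/-!
With one sample in each group, predicting `1` on the first and `x` on the second gives the
ratio `1 / x`. Moving the second prediction from `x` to `x + μbar` changes the ratio by
`1 / x - 1 / (x + μbar)`, which blows up as `x → 0⁺`.
-/

open Filter Topology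

theorem diRatio_pair (u x : ℝ) : diRatio ![u, x] ![1, 0] = u / x := by
  norm_num [diRatio, Fin.sum_univ_two]

theorem tendsto_inv_sub_inv_add_nhdsGT_zero {μ : ℝ} (hμ : μ ≠ 0) :
    Tendsto (fun x : ℝ => x⁻¹ - (x + μ)⁻¹) (𝓝[>] 0) atTop := by
  have hcont : Tendsto (fun x : ℝ => (x + μ)⁻¹) (𝓝[>] 0) (𝓝 μ⁻¹) := by
    have : ContinuousAt (fun x : ℝ => (x + μ)⁻¹) 0 :=
      (continuousAt_id.add continuousAt_const).inv₀ (by simpa using hμ)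
    simpa using this.tendsto.mono_left nhdsWithin_le_nhds
  simpa only [sub_eq_add_neg] using tendsto_inv_nhdsGT_zero.atTop_add hcont.neg

theorem di_not_uniformly_approximable_general (μbar : ℝ) (hμ0 : 0 < μbar) (hμ1 : μbar < 1)
    (K : ℝ) :
    ∃ (S : ℕ), 1 ≤ S ∧
      ∃ (a p phat : Fin S → ℝ),
        (∀ i, a i = 0 ∨ a i = 1) ∧
        1 ≤ ∑ i, a i ∧ 1 ≤ ∑ i, (1 - a i) ∧
        (∀ i, 0 < p i ∧ p i ≤ 1) ∧
        (∀ i, 0 < phat i ∧ phat i ≤ 1) ∧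
        (∀ i, |p i - phat i| ≤ μbar) ∧
        K ≤ |diRatio p a - diRatio phat a| := by
  obtain ⟨x, hxK, hx0, hx1⟩ :=
    (((tendsto_inv_sub_inv_add_nhdsGT_zero hμ0.ne').eventually_ge_atTop K).and
      (eventually_mem_nhdsWithin.and
        (nhdsWithin_le_nhds (eventually_lt_nhds (sub_pos.2 hμ1))))).exists
  rw [Set.mem_Ioi] at hx0
  refine ⟨2, by norm_num, ![1, 0], ![1, x], ![1, x + μbar], ?_, ?_, ?_, ?_, ?_, ?_, ?_⟩
  · simp [Fin.forall_fin_two]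
  · norm_num [Fin.sum_univ_two]
  · norm_num [Fin.sum_univ_two]
  · simp only [Fin.forall_fin_two, Matrix.cons_val_zero, Matrix.cons_val_one]
    exact ⟨by norm_num, hx0, by linarith⟩
  · simp only [Fin.forall_fin_two, Matrix.cons_val_zero, Matrix.cons_val_one]
    exact ⟨by norm_num, by positivity, by linarith⟩
  · simp [Fin.forall_fin_two, abs_of_pos hμ0, hμ0.le]
  · rw [diRatio_pair, diRatio_pair, one_div, one_div]
    exact hxK.trans (le_abs_self _)

theorem di_not_uniformly_approximable (μbar : ℝ) (hμ0 : 0 < μbar) (hμ1 : μbar < 1)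
    (K : ℝ) (hK : 0 < K) :
    ∃ (S : ℕ), 1 ≤ S ∧
      ∃ (a p phat : Fin S → ℝ),
        (∀ i, a i = 0 ∨ a i = 1) ∧
        1 ≤ ∑ i, a i ∧ 1 ≤ ∑ i, (1 - a i) ∧
        (∀ i, 0 < p i ∧ p i ≤ 1) ∧
        (∀ i, 0 < phat i ∧ phat i ≤ 1) ∧
        (∀ i, |p i - phat i| ≤ μbar) ∧
        K ≤ |diRatio p a - diRatio phat a| :=
  di_not_uniformly_approximable_general μbar hμ0 hμ1 K
end

section
/- Let S ≥ 1, let a, y : Fin S → ℝ satisfy a i ∈ {0,1} and y i ∈ {0,1} for all i, with ∑_i a i ≥ 1 and ∑_i (1 − a i) ≥ 1, and let p, p̂ : Fin S → ℝ. Then |fpr(p, a, y) − fpr(p̂, a, y)| ≤ ∑_i |p i − p̂ i|. -/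
/-- The false-positive-rate gap of predictions `p` with binary group labels `a`
and binary true labels `y` on a batch of `S` samples. -/
noncomputable def fprV {S : ℕ} (p a y : Fin S → ℝ) : ℝ :=
  |(∑ i, p i * (1 - y i) * a i) / (∑ i, a i) -
    (∑ i, p i * (1 - y i) * (1 - a i)) / (∑ i, (1 - a i))|

theorem fprV_perturbation (S : ℕ) (hS : 1 ≤ S) (a y p phat : Fin S → ℝ)
    (ha : ∀ i, a i = 0 ∨ a i = 1) (hy : ∀ i, y i = 0 ∨ y i = 1)
    (ha1 : 1 ≤ ∑ i, a i) (ha0 : 1 ≤ ∑ i, (1 - a i)) :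
    |fprV p a y - fprV phat a y| ≤ ∑ i, |p i - phat i| := by
  set c : Fin S → ℝ := fun i => (1 - y i) * a i with hc
  set d : Fin S → ℝ := fun i => (1 - y i) * (1 - a i) with hd
  have hcnn : ∀ i, 0 ≤ c i := fun i => by
    rcases hy i with h | h <;> rcases ha i with h' | h' <;> simp [hc, h, h']
  have hdnn : ∀ i, 0 ≤ d i := fun i => by
    rcases hy i with h | h <;> rcases ha i with h' | h' <;> simp [hd, h, h']
  have hcd : ∀ i, c i + d i ≤ 1 := fun i => by
    rcases hy i with h | h <;> simp [hc, hd, h] <;> ring_nf <;> norm_num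
  set X := (∑ i, p i * (1 - y i) * a i) / (∑ i, a i) with hX
  set Y := (∑ i, p i * (1 - y i) * (1 - a i)) / (∑ i, (1 - a i)) with hY
  set X' := (∑ i, phat i * (1 - y i) * a i) / (∑ i, a i) with hX'
  set Y' := (∑ i, phat i * (1 - y i) * (1 - a i)) / (∑ i, (1 - a i)) with hY'
  have hXX' : |X - X'| ≤ ∑ i, |p i - phat i| * c i := by
    have : X - X' = (∑ i, (p i - phat i) * c i) / (∑ i, a i) := by
      rw [hX, hX', div_sub_div_same, ← Finset.sum_sub_distrib]
      congr 1; apply Finset.sum_congr rfl; intro i _; simp [hc]; ring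
    rw [this, abs_div, abs_of_pos (lt_of_lt_of_le one_pos ha1)]
    calc |∑ i, (p i - phat i) * c i| / (∑ i, a i)
        ≤ (∑ i, |p i - phat i| * c i) / (∑ i, a i) := by
          gcongr
          exact (Finset.abs_sum_le_sum_abs _ _).trans (le_of_eq (Finset.sum_congr rfl
              fun i _ => by rw [abs_mul, abs_of_nonneg (hcnn i)]))
      _ ≤ ∑ i, |p i - phat i| * c i :=
          div_le_self (Finset.sum_nonneg fun i _ => mul_nonneg (abs_nonneg _) (hcnn i)) ha1
  have hYY' : |Y - Y'| ≤ ∑ i, |p i - phat i| * d i := by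
    have : Y - Y' = (∑ i, (p i - phat i) * d i) / (∑ i, (1 - a i)) := by
      rw [hY, hY', div_sub_div_same, ← Finset.sum_sub_distrib]
      congr 1; apply Finset.sum_congr rfl; intro i _; simp [hd]; ring
    rw [this, abs_div, abs_of_pos (lt_of_lt_of_le one_pos ha0)]
    calc |∑ i, (p i - phat i) * d i| / (∑ i, (1 - a i))
        ≤ (∑ i, |p i - phat i| * d i) / (∑ i, (1 - a i)) := by
          gcongr
          exact (Finset.abs_sum_le_sum_abs _ _).trans (le_of_eq (Finset.sum_congr rfl
              fun i _ => by rw [abs_mul, abs_of_nonneg (hdnn i)]))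
      _ ≤ ∑ i, |p i - phat i| * d i :=
          div_le_self (Finset.sum_nonneg fun i _ => mul_nonneg (abs_nonneg _) (hdnn i)) ha0
  have step1 : |fprV p a y - fprV phat a y| ≤ |X - X'| + |Y - Y'| := by
    have h1 : |fprV p a y - fprV phat a y| ≤ |(X - Y) - (X' - Y')| :=
      abs_abs_sub_abs_le_abs_sub _ _
    have h2 : (X - Y) - (X' - Y') = (X - X') - (Y - Y') := by ring
    calc |fprV p a y - fprV phat a y| ≤ |(X - Y) - (X' - Y')| := h1
      _ = |(X - X') - (Y - Y')| := by rw [h2]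
      _ ≤ |X - X'| + |Y - Y'| := abs_sub _ _
  calc |fprV p a y - fprV phat a y| ≤ |X - X'| + |Y - Y'| := step1
    _ ≤ (∑ i, |p i - phat i| * c i) + (∑ i, |p i - phat i| * d i) := add_le_add hXX' hYY'
    _ = ∑ i, |p i - phat i| * (c i + d i) := by rw [← Finset.sum_add_distrib]; exact Finset.sum_congr rfl fun i _ => by ring
    _ ≤ ∑ i, |p i - phat i| := Finset.sum_le_sum fun i _ =>
        mul_le_of_le_one_right (abs_nonneg _) (hcd i)
end

section
/- Let S ≥ 1 and m ≥ 1 be natural numbers and μ̄ > 0. Let y : Fin S → Fin m → ℝ satisfy y i j ∈ {0,1} for all i, j and ∑_i y i j ≥ 1 for every class j, and let h, ĥ : Fin S → Fin m → ℝ satisfy 0 ≤ h i j ≤ 1 and 0 ≤ ĥ i j ≤ 1 for all i, j, and ∑_j |h i j − ĥ i j| ≤ μ̄/S for every i. Then |l_Q(h, y) − l_Q(ĥ, y)| ≤ μ̄. -/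
/-!
`lQ h y` is `√(1/m)` times the Euclidean norm of the vector of per-class errors `1 - A j`, where
`A j` is the mean of the column `h · j` weighted by `y · j`. Since `1/m ≤ 1` and `‖·‖₂ ≤ ‖·‖₁`, the
change of `lQ` is at most `∑ j, |A j - Â j|`, with `Â` the corresponding means of `hhat`. A
weighted mean moves by at most the total change of its entries, so this is at most
`∑ j, ∑ i, |h i j - hhat i j| ≤ S • (μbar / S)`.
-/

/-- The Q-mean loss for a batch of `S` samples with `m` classes, per-class
prediction probabilities `h` and one-hot true labels `y`. -/
noncomputable def lQ {S m : ℕ} (h y : Fin S → Fin m → ℝ) : ℝ :=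
  Real.sqrt ((1 / (m : ℝ)) *
    ∑ j, (1 - (∑ i, y i j * h i j) / (∑ i, y i j)) ^ 2)

open Finset

theorem PiLp.norm_le_sum_norm {ι : Type*} [Fintype ι] {p : ENNReal} [Fact (1 ≤ p)]
    {β : ι → Type*} [∀ i, SeminormedAddCommGroup (β i)] (x : PiLp p β) :
    ‖x‖ ≤ ∑ i, ‖x i‖ := by
  classical
  calc ‖x‖ = ‖∑ i, PiLp.single p i (x i)‖ := by
        congr 1; ext j; simp
    _ ≤ ∑ i, ‖x i‖ := (norm_sum_le _ _).trans_eq (by simp [PiLp.norm_single])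

theorem abs_sum_mul_div_sum_sub_le {ι : Type*} (s : Finset ι) {w f g : ι → ℝ}
    (hw : ∀ i ∈ s, 0 ≤ w i) :
    |(∑ i ∈ s, w i * f i) / (∑ i ∈ s, w i) - (∑ i ∈ s, w i * g i) / (∑ i ∈ s, w i)|
      ≤ ∑ i ∈ s, |f i - g i| := by
  have hW : 0 ≤ ∑ i ∈ s, w i := sum_nonneg hw
  rw [div_sub_div_same, ← sum_sub_distrib, abs_div, abs_of_nonneg hW]
  refine div_le_of_le_mul₀ hW (sum_nonneg fun i _ => abs_nonneg _) ?_
  calc |∑ i ∈ s, (w i * f i - w i * g i)|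
      ≤ ∑ i ∈ s, w i * |f i - g i| := by
        refine (abs_sum_le_sum_abs _ _).trans_eq (sum_congr rfl fun i hi => ?_)
        rw [← mul_sub, abs_mul, abs_of_nonneg (hw i hi)]
    _ ≤ ∑ i ∈ s, w i * ∑ k ∈ s, |f k - g k| := by
        gcongr with i hi
        · exact hw i hi
        · exact single_le_sum (fun k _ => abs_nonneg (f k - g k)) hi
    _ = (∑ k ∈ s, |f k - g k|) * ∑ i ∈ s, w i := by rw [← sum_mul, mul_comm]

theorem abs_sqrt_mul_sum_sq_sub_le {ι : Type*} [Fintype ι] {c : ℝ} (hc₀ : 0 ≤ c) (hc₁ : c ≤ 1)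
    (a b : ι → ℝ) :
    |√(c * ∑ i, a i ^ 2) - √(c * ∑ i, b i ^ 2)| ≤ ∑ i, |a i - b i| := by
  have hnorm : ∀ a : ι → ℝ, √(c * ∑ i, a i ^ 2) = √c * ‖WithLp.toLp 2 a‖ := fun a => by
    simp [EuclideanSpace.norm_eq, Real.sqrt_mul hc₀]
  rw [hnorm, hnorm, ← mul_sub, abs_mul, abs_of_nonneg (Real.sqrt_nonneg c)]
  calc √c * |‖WithLp.toLp 2 a‖ - ‖WithLp.toLp 2 b‖|
      ≤ 1 * ‖WithLp.toLp 2 a - WithLp.toLp 2 b‖ :=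
        mul_le_mul (Real.sqrt_le_one.mpr hc₁) (abs_norm_sub_norm_le _ _) (abs_nonneg _) zero_le_one
    _ ≤ ∑ i, |a i - b i| := by
        rw [one_mul]
        simpa using PiLp.norm_le_sum_norm (WithLp.toLp 2 a - WithLp.toLp 2 b)

theorem lQ_lipschitz_general (S m : ℕ) (μbar : ℝ) (hμ : 0 < μbar)
    (y h hhat : Fin S → Fin m → ℝ)
    (hy : ∀ i j, y i j = 0 ∨ y i j = 1)
    (hclose : ∀ i, ∑ j, |h i j - hhat i j| ≤ μbar / (S : ℝ)) :
    |lQ h y - lQ hhat y| ≤ μbar := by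
  have hy₀ : ∀ i j, 0 ≤ y i j := fun i j => by rcases hy i j with h | h <;> simp [h]
  calc |lQ h y - lQ hhat y|
      ≤ ∑ j, |(1 - (∑ i, y i j * h i j) / (∑ i, y i j)) -
          (1 - (∑ i, y i j * hhat i j) / (∑ i, y i j))| :=
        abs_sqrt_mul_sum_sq_sub_le (by positivity) (by simpa using Nat.cast_inv_le_one m) _ _
    _ ≤ ∑ j, ∑ i, |h i j - hhat i j| := by
        gcongr with j
        rw [sub_sub_sub_cancel_left, abs_sub_comm]
        exact abs_sum_mul_div_sum_sub_le _ fun i _ => hy₀ i j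
    _ = ∑ i, ∑ j, |h i j - hhat i j| := sum_comm
    _ ≤ ∑ _i : Fin S, μbar / S := sum_le_sum fun i _ => hclose i
    _ ≤ μbar := by
        rcases S.eq_zero_or_pos with rfl | hS
        · simpa using hμ.le
        · simp [mul_div_cancel₀, hS.ne']

theorem lQ_lipschitz (S m : ℕ) (hS : 1 ≤ S) (hm : 1 ≤ m) (μbar : ℝ) (hμ : 0 < μbar)
    (y h hhat : Fin S → Fin m → ℝ)
    (hy : ∀ i j, y i j = 0 ∨ y i j = 1)
    (hy1 : ∀ j, 1 ≤ ∑ i, y i j)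
    (hb : ∀ i j, 0 ≤ h i j ∧ h i j ≤ 1)
    (hbhat : ∀ i j, 0 ≤ hhat i j ∧ hhat i j ≤ 1)
    (hclose : ∀ i, ∑ j, |h i j - hhat i j| ≤ μbar / (S : ℝ)) :
    |lQ h y - lQ hhat y| ≤ μbar :=
  lQ_lipschitz_general S m μbar hμ y h hhat hy hclose
end

section
/- Let (Ω, μ) be a probability space with measurable maps A, Y : Ω → Bool and a measurable h : Ω → ℝ with 0 ≤ h ω ≤ 1 for all ω. Assume each of the four events {A = a} ∩ {Y = b} (a, b ∈ Bool) has positive μ-measure, and assume the base rates differ: μ[{Y = true} | {A = false}] ≠ μ[{Y = true} | {A = true}] (conditional probabilities). Then the following are equivalent: (1) h is calibrated on both groups and satisfies equalized odds; (2) h is a perfect predictor, i.e. h = (the real-valued indicator of {Y = true}) μ-almost everywhere. -/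
open MeasureTheory ProbabilityTheory

/-! Calibration on group `a` makes the mean of `h` under `μ[|A = a]` equal to the base rate
`p a`, and splitting that mean along `Y` gives `p a * FNR a = (1 - p a) * FPR a`. Equalized odds
says that `FPR` and `FNR` do not depend on `a`, so the two relations with `p false ≠ p true`
force both rates to vanish; for `0 ≤ h ≤ 1` this means `h = 1` a.e. on `{Y = true}` and `h = 0`
a.e. on `{Y = false}`. -/

section

variable {Ω : Type*} [MeasurableSpace Ω] {μ : Measure Ω} {s t : Set Ω} {f : Ω → ℝ}

lemma setIntegral_eq_measureReal_mul_integral_cond [IsFiniteMeasure μ] (f : Ω → ℝ) :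
    ∫ x in s, f x ∂μ = μ.real s * ∫ x, f x ∂μ[|s] := by
  rcases eq_or_ne (μ s) 0 with hs | hs
  · simp [Measure.restrict_eq_zero.mpr hs, measureReal_def, hs]
  · rw [ProbabilityTheory.cond, integral_smul_measure, smul_eq_mul, ENNReal.toReal_inv,
      ← mul_assoc, measureReal_def,
      mul_inv_cancel₀ (ENNReal.toReal_ne_zero.mpr ⟨hs, measure_ne_top μ s⟩), one_mul]

lemma integral_cond_eq_zero_iff [IsFiniteMeasure μ] (hs : MeasurableSet s) (hμs : μ s ≠ 0)
    (hf : ∀ x ∈ s, 0 ≤ f x) (hfi : IntegrableOn f s μ) :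
    ∫ x, f x ∂μ[|s] = 0 ↔ ∀ᵐ x ∂μ, x ∈ s → f x = 0 := by
  have hμs' : μ.real s ≠ 0 := ENNReal.toReal_ne_zero.mpr ⟨hμs, measure_ne_top μ s⟩
  rw [← mul_eq_zero_iff_left hμs', ← setIntegral_eq_measureReal_mul_integral_cond,
    setIntegral_eq_zero_iff_of_nonneg_ae ((ae_restrict_iff' hs).mpr (.of_forall hf)) hfi,
    Filter.EventuallyEq, ae_restrict_iff' hs]
  rfl

lemma setIntegral_one_sub_eq_setIntegral_compl [IsFiniteMeasure μ] (ht : MeasurableSet t)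
    (hf : Integrable f μ) (hcal : ∫ x, f x ∂μ = μ.real t) :
    ∫ x in t, 1 - f x ∂μ = ∫ x in tᶜ, f x ∂μ := by
  rw [integral_sub (integrable_const 1) hf.integrableOn, setIntegral_const,
    smul_eq_mul, mul_one, ← hcal, ← integral_add_compl ht hf, add_sub_cancel_left]

lemma measureReal_cond_mul_integral_one_sub_cond_eq [IsFiniteMeasure μ] (hs : MeasurableSet s)
    (hμs : μ s ≠ 0) (ht : MeasurableSet t) (hf : Integrable f μ[|s])
    (hcal : ∫ x, f x ∂μ[|s] = μ[|s].real t) :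
    μ[|s].real t * ∫ x, 1 - f x ∂μ[|t ∩ s] =
      (1 - μ[|s].real t) * ∫ x, f x ∂μ[|tᶜ ∩ s] := by
  have := cond_isProbabilityMeasure (μ := μ) hμs
  rw [← probReal_compl_eq_one_sub ht, Set.inter_comm t, Set.inter_comm tᶜ,
    ← cond_cond_eq_cond_inter hs ht, ← cond_cond_eq_cond_inter hs ht.compl,
    ← setIntegral_eq_measureReal_mul_integral_cond,
    ← setIntegral_eq_measureReal_mul_integral_cond]
  exact setIntegral_one_sub_eq_setIntegral_compl ht hf hcal

lemma condExp_comap_ae_eq_of_ae_eq [IsFiniteMeasure μ] {g : Ω → ℝ} (hf : Measurable f)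
    (hfi : Integrable f μ) (hgf : g =ᵐ[μ] f) :
    μ[g | MeasurableSpace.comap f (borel ℝ)] =ᵐ[μ] f := by
  have hsm : StronglyMeasurable[MeasurableSpace.comap f (borel ℝ)] f :=
    (Measurable.of_comap_le le_rfl).stronglyMeasurable
  have hm : MeasurableSpace.comap f (borel ℝ) ≤ ‹_› := hf.comap_le
  exact (condExp_congr_ae hgf).trans (by rw [condExp_of_stronglyMeasurable hm hsm hfi])

end

lemma eq_zero_and_eq_zero_of_mul_eq_one_sub_mul {p q x y : ℝ} (hpq : p ≠ q) (hx : 0 ≤ x)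
    (hy : 0 ≤ y) (hp : p * x = (1 - p) * y) (hq : q * x = (1 - q) * y) : x = 0 ∧ y = 0 := by
  have hxy : (p - q) * (x + y) = 0 := by linear_combination hp - hq
  have := (mul_eq_zero.mp hxy).resolve_left (sub_ne_zero.mpr hpq)
  exact ⟨by linarith, by linarith⟩

noncomputable section Fairness

variable {Ω : Type*} [MeasurableSpace Ω] (μ : Measure Ω) (A Y : Ω → Bool) (h : Ω → ℝ)

def baseRate (a : Bool) : ℝ := μ[|{ω | A ω = a}].real {ω | Y ω = true}

def falsePositiveRate (a : Bool) : ℝ :=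
  ∫ ω, h ω ∂μ[|{ω | Y ω = false} ∩ {ω | A ω = a}]

def falseNegativeRate (a : Bool) : ℝ :=
  ∫ ω, (1 - h ω) ∂μ[|{ω | Y ω = true} ∩ {ω | A ω = a}]

variable {μ A Y h}

lemma integrable_of_nonneg_of_le_one [IsFiniteMeasure μ] (hh : Measurable h)
    (hbd : ∀ ω, 0 ≤ h ω ∧ h ω ≤ 1) : Integrable h μ :=
  .of_bound hh.aestronglyMeasurable 1
    (.of_forall fun ω => abs_le.2 ⟨by linarith [hbd ω], (hbd ω).2⟩)

lemma falsePositiveRate_nonneg (hbd : ∀ ω, 0 ≤ h ω ∧ h ω ≤ 1) (a : Bool) :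
    0 ≤ falsePositiveRate μ A Y h a :=
  integral_nonneg fun ω => (hbd ω).1

lemma falseNegativeRate_nonneg (hbd : ∀ ω, 0 ≤ h ω ∧ h ω ≤ 1) (a : Bool) :
    0 ≤ falseNegativeRate μ A Y h a :=
  integral_nonneg fun ω => sub_nonneg.2 (hbd ω).2

lemma falsePositiveRate_eq_zero_iff [IsFiniteMeasure μ] (hA : Measurable A) (hY : Measurable Y)
    (hh : Measurable h) (hbd : ∀ ω, 0 ≤ h ω ∧ h ω ≤ 1) {a : Bool}
    (hcell : μ ({ω | Y ω = false} ∩ {ω | A ω = a}) ≠ 0) :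
    falsePositiveRate μ A Y h a = 0 ↔
      ∀ᵐ ω ∂μ, Y ω = false → A ω = a → h ω = 0 := by
  have hs : MeasurableSet ({ω | Y ω = false} ∩ {ω | A ω = a}) :=
    (hY (.singleton _)).inter (hA (.singleton _))
  rw [falsePositiveRate, integral_cond_eq_zero_iff hs hcell (fun ω _ => (hbd ω).1)
    (integrable_of_nonneg_of_le_one hh hbd).integrableOn]
  simp only [Set.mem_inter_iff, Set.mem_ofPred_eq, and_imp]

lemma falseNegativeRate_eq_zero_iff [IsFiniteMeasure μ] (hA : Measurable A) (hY : Measurable Y)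
    (hh : Measurable h) (hbd : ∀ ω, 0 ≤ h ω ∧ h ω ≤ 1) {a : Bool}
    (hcell : μ ({ω | Y ω = true} ∩ {ω | A ω = a}) ≠ 0) :
    falseNegativeRate μ A Y h a = 0 ↔
      ∀ᵐ ω ∂μ, Y ω = true → A ω = a → h ω = 1 := by
  have hs : MeasurableSet ({ω | Y ω = true} ∩ {ω | A ω = a}) :=
    (hY (.singleton _)).inter (hA (.singleton _))
  rw [falseNegativeRate, integral_cond_eq_zero_iff hs hcell (fun ω _ => sub_nonneg.2 (hbd ω).2)
    ((integrable_const 1).sub (integrable_of_nonneg_of_le_one hh hbd)).integrableOn]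
  simp only [Set.mem_inter_iff, Set.mem_ofPred_eq, and_imp, sub_eq_zero, eq_comm (a := (1 : ℝ))]

lemma baseRate_mul_falseNegativeRate_eq_of_calibrated [IsFiniteMeasure μ] (hA : Measurable A)
    (hY : Measurable Y) (hh : Measurable h) (hbd : ∀ ω, 0 ≤ h ω ∧ h ω ≤ 1) {a : Bool}
    (hgroup : μ {ω | A ω = a} ≠ 0)
    (hcal : (μ[|{ω | A ω = a}])[Set.indicator {ω | Y ω = true} (fun _ => (1 : ℝ)) |
      MeasurableSpace.comap h (borel ℝ)] =ᵐ[μ[|{ω | A ω = a}]] h) :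
    baseRate μ A Y a * falseNegativeRate μ A Y h a =
      (1 - baseRate μ A Y a) * falsePositiveRate μ A Y h a := by
  have := cond_isProbabilityMeasure hgroup
  have hYt : MeasurableSet {ω | Y ω = true} := hY (.singleton _)
  have hm : MeasurableSpace.comap h (borel ℝ) ≤ ‹_› := hh.comap_le
  have hmean : ∫ ω, h ω ∂μ[|{ω | A ω = a}] = baseRate μ A Y a := by
    rw [← integral_congr_ae hcal, integral_condExp hm]
    exact integral_indicator_one hYt
  have hcompl : {ω | Y ω = true}ᶜ = {ω | Y ω = false} := by ext; simp
  rw [falseNegativeRate, falsePositiveRate, ← hcompl]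
  exact measureReal_cond_mul_integral_one_sub_cond_eq (hA (.singleton _)) hgroup hYt
    (integrable_of_nonneg_of_le_one hh hbd) hmean

lemma ae_eq_indicator_iff_forall_rates_eq_zero [IsFiniteMeasure μ] (hA : Measurable A)
    (hY : Measurable Y) (hh : Measurable h) (hbd : ∀ ω, 0 ≤ h ω ∧ h ω ≤ 1)
    (hcell : ∀ a b, μ ({ω | Y ω = b} ∩ {ω | A ω = a}) ≠ 0) :
    h =ᵐ[μ] Set.indicator {ω | Y ω = true} (fun _ => (1 : ℝ)) ↔
      ∀ a, falsePositiveRate μ A Y h a = 0 ∧ falseNegativeRate μ A Y h a = 0 := by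
  simp only [falsePositiveRate_eq_zero_iff hA hY hh hbd (hcell _ _),
    falseNegativeRate_eq_zero_iff hA hY hh hbd (hcell _ _), ← ae_all_iff,
    ← Filter.eventually_and]
  refine Filter.eventually_congr (.of_forall fun ω => ⟨fun hω a => ?_, fun hω => ?_⟩)
  · constructor <;> rintro hYω rfl <;> simp [hω, hYω]
  · cases hYω : Y ω
    · rw [Set.indicator_of_notMem (by simp [hYω]), (hω (A ω)).1 hYω rfl]
    · rw [Set.indicator_of_mem (show ω ∈ {ω | Y ω = true} from hYω), (hω (A ω)).2 hYω rfl]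

end Fairness

theorem impossibility_calibration_eo (Ω : Type*) [MeasurableSpace Ω]
    (μ : Measure Ω) [IsProbabilityMeasure μ]
    (A Y : Ω → Bool) (hA : Measurable A) (hY : Measurable Y)
    (h : Ω → ℝ) (hh : Measurable h) (hbd : ∀ ω, 0 ≤ h ω ∧ h ω ≤ 1)
    (hpos : ∀ a b : Bool, 0 < μ ({ω | A ω = a} ∩ {ω | Y ω = b}))
    (hbase : μ[|{ω | A ω = false}] {ω | Y ω = true} ≠
      μ[|{ω | A ω = true}] {ω | Y ω = true}) :
    ((∀ a : Bool,
        (μ[|{ω | A ω = a}])[Set.indicator {ω | Y ω = true} (fun _ => (1 : ℝ)) |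
            MeasurableSpace.comap h (borel ℝ)]
          =ᵐ[μ[|{ω | A ω = a}]] h) ∧
      (∫ ω, h ω ∂(μ[|{ω | Y ω = false} ∩ {ω | A ω = false}]) =
          ∫ ω, h ω ∂(μ[|{ω | Y ω = false} ∩ {ω | A ω = true}])) ∧
      (∫ ω, (1 - h ω) ∂(μ[|{ω | Y ω = true} ∩ {ω | A ω = false}]) =
          ∫ ω, (1 - h ω) ∂(μ[|{ω | Y ω = true} ∩ {ω | A ω = true}])))
      ↔ h =ᵐ[μ] Set.indicator {ω | Y ω = true} (fun _ => (1 : ℝ)) := by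
  have hgroup : ∀ a, μ {ω | A ω = a} ≠ 0 := fun a =>
    (measure_pos_of_superset Set.inter_subset_left (hpos a true).ne').ne'
  have hcell : ∀ a b, μ ({ω | Y ω = b} ∩ {ω | A ω = a}) ≠ 0 := fun a b => by
    rw [Set.inter_comm]; exact (hpos a b).ne'
  have hperfect := ae_eq_indicator_iff_forall_rates_eq_zero hA hY hh hbd hcell
  constructor
  · rintro ⟨hcal,
      (hFP_eq : falsePositiveRate μ A Y h false = falsePositiveRate μ A Y h true),
      (hFN_eq : falseNegativeRate μ A Y h false = falseNegativeRate μ A Y h true)⟩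
    have hbal a :=
      baseRate_mul_falseNegativeRate_eq_of_calibrated hA hY hh hbd (hgroup a) (hcal a)
    have hbase' : baseRate μ A Y false ≠ baseRate μ A Y true := fun heq =>
      hbase ((ENNReal.toReal_eq_toReal_iff' (measure_ne_top _ _) (measure_ne_top _ _)).1 heq)
    obtain ⟨hFN0, hFP0⟩ := eq_zero_and_eq_zero_of_mul_eq_one_sub_mul hbase'
      (falseNegativeRate_nonneg hbd _) (falsePositiveRate_nonneg hbd _)
      (hbal false) (hFN_eq ▸ hFP_eq ▸ hbal true)
    exact hperfect.2 fun a => by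
      cases a; exacts [⟨hFP0, hFN0⟩, ⟨hFP_eq ▸ hFP0, hFN_eq ▸ hFN0⟩]
  · intro hperf
    have hrates := hperfect.1 hperf
    exact ⟨fun a => condExp_comap_ae_eq_of_ae_eq hh (integrable_of_nonneg_of_le_one hh hbd)
      (cond_absolutelyContinuous.ae_eq hperf.symm), (hrates false).1.trans (hrates true).1.symm,
      (hrates false).2.trans (hrates true).2.symm⟩
end
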